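/- Let k be a field of characteristic 2, K = k(s) the field of rational functions, and M the k[x,y]/(x²,y²)-module with basis {u_i, v_i : i ≥ 0} and action x·u_i = v_i, y·u_i = v_{i−1} (v_{−1}=0), x·v_i = y·v_i = 0. Then on M_K = K ⊗_k M, the kernel of multiplication by x + sy equals the image of multiplication by x + sy, namely the K-span of {v_i : i ≥ 0}. -/

import Mathlib

/-!
Identify `K ⊗ M` with `(ℕ →₀ K) × (ℕ →₀ K)` through the coordinates of the `uᵢ` and of the
`vᵢ`. Then `x + s y` becomes `(f, g) ↦ (0, (1 + s S) f)`, where `S` shifts coefficients down by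
one. Every finitely supported `f` is killed by a power of `S`, so `1 + s S` is bijective, with
inverse `∑ⱼ (-s S)ʲ`. Hence kernel and image of `x + s y` are both `0 × (ℕ →₀ K)`, the span of
the `vᵢ`.
-/

open TensorProduct

/-- The underlying space of the Klein-four module `M` with basis `{uᵢ, vᵢ : i ≥ 0}`. -/
abbrev KleinM (k : Type*) [Field k] := ((ℕ →₀ k) × (ℕ →₀ k))

/-- Multiplication by `x`: `x·uᵢ = vᵢ`, `x·vᵢ = 0`. -/
noncomputable def opX (k : Type*) [Field k] : KleinM k →ₗ[k] KleinM k :=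
  (LinearMap.inr k (ℕ →₀ k) (ℕ →₀ k)).comp (LinearMap.fst k (ℕ →₀ k) (ℕ →₀ k))

/-- Multiplication by `y`: `y·uᵢ = vᵢ₋₁` (with `v₋₁ = 0`), `y·vᵢ = 0`. -/
noncomputable def opY (k : Type*) [Field k] : KleinM k →ₗ[k] KleinM k :=
  ((LinearMap.inr k (ℕ →₀ k) (ℕ →₀ k)).comp
    (Finsupp.lcomapDomain (fun n => n + 1) (add_left_injective 1))).comp
    (LinearMap.fst k (ℕ →₀ k) (ℕ →₀ k))


namespace Module.End

variable {R M : Type*} [Ring R] [AddCommGroup M] [Module R M]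

theorem injective_one_add_of_pow_apply_eq_zero (N : Module.End R M)
    (hN : ∀ x, ∃ n, (N ^ n) x = 0) : Function.Injective ⇑(1 + N) := by
  rw [← LinearMap.ker_eq_bot, LinearMap.ker_eq_bot']
  intro x hx
  have hNx : N x = -x := eq_neg_of_add_eq_zero_right hx
  have hpow : ∀ n, (N ^ n) x = (-1 : R) ^ n • x := by
    intro n
    induction n with
    | zero => simp
    | succ n ih => rw [pow_succ, mul_apply, hNx, map_neg, ih, pow_succ, mul_smul, neg_one_smul,
        smul_neg]
  obtain ⟨n, hn⟩ := hN x
  rw [hpow] at hn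
  exact ((isUnit_neg_one (α := R)).pow n).smul_eq_zero.mp hn

theorem surjective_one_add_of_pow_apply_eq_zero (N : Module.End R M)
    (hN : ∀ x, ∃ n, (N ^ n) x = 0) : Function.Surjective ⇑(1 + N) := by
  intro y
  obtain ⟨n, hn⟩ := hN y
  refine ⟨(∑ i ∈ Finset.range n, (-N) ^ i) y, ?_⟩
  have hgeom : (1 + N) * ∑ i ∈ Finset.range n, (-N) ^ i = 1 - (-N) ^ n := by
    rw [← mul_neg_geom_sum, sub_neg_eq_add]
  rw [← mul_apply, hgeom, LinearMap.sub_apply, neg_pow, mul_apply, hn, map_zero, sub_zero,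
    one_apply]

end Module.End

namespace Finsupp

variable (R : Type*) [CommRing R]

noncomputable abbrev shiftLeft : (ℕ →₀ R) →ₗ[R] (ℕ →₀ R) :=
  lcomapDomain (fun n => n + 1) (add_left_injective 1)

variable {R}

theorem smul_shiftLeft_pow_apply (c : R) (n : ℕ) (f : ℕ →₀ R) (m : ℕ) :
    ((c • shiftLeft R) ^ n) f m = c ^ n * f (m + n) := by
  induction n generalizing f with
  | zero => simp
  | succ n ih =>
    rw [pow_succ, Module.End.mul_apply, ih]
    simp [lcomapDomain, pow_succ, mul_assoc, add_assoc]

theorem exists_smul_shiftLeft_pow_apply_eq_zero (c : R) (f : ℕ →₀ R) :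
    ∃ n, ((c • shiftLeft R) ^ n) f = 0 := by
  refine ⟨f.support.sup id + 1, Finsupp.ext fun m => ?_⟩
  rw [smul_shiftLeft_pow_apply, notMem_support_iff.mp, mul_zero, coe_zero, Pi.zero_apply]
  intro hm
  have := Finset.le_sup (f := id) hm
  simp only [id] at this
  omega

end Finsupp

theorem LinearEquiv.range_eq_comap_range_comp {R M N P : Type*} [Semiring R] [AddCommMonoid M]
    [AddCommMonoid N] [AddCommMonoid P] [Module R M] [Module R N] [Module R P]
    (e : M ≃ₗ[R] N) (f : P →ₗ[R] M) :
    LinearMap.range f = (LinearMap.range (e.toLinearMap ∘ₗ f)).comap e.toLinearMap := by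
  rw [LinearMap.range_comp, Submodule.comap_map_eq_of_injective e.injective]

section BaseChange

variable (k A : Type*) [Field k] [CommRing A] [Algebra k A]

noncomputable def kleinEquiv : A ⊗[k] KleinM k ≃ₗ[A] (ℕ →₀ A) × (ℕ →₀ A) :=
  prodRight k A A _ _ ≪≫ₗ
    (finsuppScalarRight k A A ℕ).prodCongr (finsuppScalarRight k A A ℕ)

variable {k A}

theorem kleinEquiv_tmul (a : A) (m : KleinM k) :
    kleinEquiv k A (a ⊗ₜ m) =
      (finsuppScalarRight k A A ℕ (a ⊗ₜ m.1), finsuppScalarRight k A A ℕ (a ⊗ₜ m.2)) := rfl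

theorem kleinEquiv_comp_baseChange_opX :
    (kleinEquiv k A).toLinearMap ∘ₗ (opX k).baseChange A =
      (LinearMap.inr A (ℕ →₀ A) (ℕ →₀ A) ∘ₗ LinearMap.fst A (ℕ →₀ A) (ℕ →₀ A)) ∘ₗ
        (kleinEquiv k A).toLinearMap := by
  refine AlgebraTensorModule.ext fun a m => ?_
  simp [kleinEquiv_tmul, opX]

theorem kleinEquiv_comp_baseChange_opY :
    (kleinEquiv k A).toLinearMap ∘ₗ (opY k).baseChange A =
      (LinearMap.inr A (ℕ →₀ A) (ℕ →₀ A) ∘ₗ Finsupp.shiftLeft A ∘ₗ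
        LinearMap.fst A (ℕ →₀ A) (ℕ →₀ A)) ∘ₗ (kleinEquiv k A).toLinearMap := by
  refine AlgebraTensorModule.ext fun a m => ?_
  ext n <;> simp [kleinEquiv_tmul, opY, finsuppScalarRight_apply_tmul_apply]

theorem kleinEquiv_comp_baseChange_inr :
    (kleinEquiv k A).toLinearMap ∘ₗ (LinearMap.inr k (ℕ →₀ k) (ℕ →₀ k)).baseChange A =
      LinearMap.inr A (ℕ →₀ A) (ℕ →₀ A) ∘ₗ (finsuppScalarRight k A A ℕ).toLinearMap := by
  refine AlgebraTensorModule.ext fun a m => ?_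
  simp [kleinEquiv_tmul]

theorem kleinEquiv_comp_baseChange_opX_add_smul_opY (c : A) :
    (kleinEquiv k A).toLinearMap ∘ₗ ((opX k).baseChange A + c • (opY k).baseChange A) =
      (LinearMap.inr A (ℕ →₀ A) (ℕ →₀ A) ∘ₗ (1 + c • Finsupp.shiftLeft A) ∘ₗ
        LinearMap.fst A (ℕ →₀ A) (ℕ →₀ A)) ∘ₗ (kleinEquiv k A).toLinearMap := by
  rw [LinearMap.comp_add, LinearMap.comp_smul, kleinEquiv_comp_baseChange_opX,
    kleinEquiv_comp_baseChange_opY, LinearMap.add_comp, LinearMap.comp_add, LinearMap.add_comp,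
    LinearMap.smul_comp, LinearMap.comp_smul, LinearMap.smul_comp]
  rfl

theorem ker_baseChange_opX_add_smul_opY (c : A) :
    LinearMap.ker ((opX k).baseChange A + c • (opY k).baseChange A) =
      (LinearMap.range (LinearMap.inr A (ℕ →₀ A) (ℕ →₀ A))).comap
        (kleinEquiv k A).toLinearMap := by
  have hF := Module.End.injective_one_add_of_pow_apply_eq_zero (c • Finsupp.shiftLeft A)
    (Finsupp.exists_smul_shiftLeft_pow_apply_eq_zero c)
  rw [← LinearEquiv.ker_comp (kleinEquiv k A), kleinEquiv_comp_baseChange_opX_add_smul_opY,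
    LinearMap.ker_comp,
    LinearMap.ker_comp_of_ker_eq_bot _ (LinearMap.ker_eq_bot_of_injective LinearMap.inr_injective),
    LinearMap.ker_comp_of_ker_eq_bot _ (LinearMap.ker_eq_bot_of_injective hF), LinearMap.ker_fst]

theorem range_baseChange_opX_add_smul_opY (c : A) :
    LinearMap.range ((opX k).baseChange A + c • (opY k).baseChange A) =
      (LinearMap.range (LinearMap.inr A (ℕ →₀ A) (ℕ →₀ A))).comap
        (kleinEquiv k A).toLinearMap := by
  have hF := Module.End.surjective_one_add_of_pow_apply_eq_zero (c • Finsupp.shiftLeft A)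
    (Finsupp.exists_smul_shiftLeft_pow_apply_eq_zero c)
  have hG : LinearMap.range ((1 + c • Finsupp.shiftLeft A) ∘ₗ
      LinearMap.fst A (ℕ →₀ A) (ℕ →₀ A)) = ⊤ :=
    LinearMap.range_eq_top.mpr (hF.comp LinearMap.fst_surjective)
  rw [(kleinEquiv k A).range_eq_comap_range_comp, kleinEquiv_comp_baseChange_opX_add_smul_opY,
    LinearEquiv.range_comp, LinearMap.range_comp_of_range_eq_top _ hG]

theorem range_baseChange_inr :
    LinearMap.range ((LinearMap.inr k (ℕ →₀ k) (ℕ →₀ k)).baseChange A) =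
      (LinearMap.range (LinearMap.inr A (ℕ →₀ A) (ℕ →₀ A))).comap
        (kleinEquiv k A).toLinearMap := by
  rw [(kleinEquiv k A).range_eq_comap_range_comp, kleinEquiv_comp_baseChange_inr,
    LinearEquiv.range_comp]

end BaseChange

theorem stmt11_general (k : Type*) [Field k] :
    LinearMap.ker ((opX k).baseChange (RatFunc k) +
        (RatFunc.X : RatFunc k) • (opY k).baseChange (RatFunc k)) =
      LinearMap.range ((opX k).baseChange (RatFunc k) +
        (RatFunc.X : RatFunc k) • (opY k).baseChange (RatFunc k)) ∧
    LinearMap.range ((opX k).baseChange (RatFunc k) +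
        (RatFunc.X : RatFunc k) • (opY k).baseChange (RatFunc k)) =
      LinearMap.range ((LinearMap.inr k (ℕ →₀ k) (ℕ →₀ k)).baseChange (RatFunc k)) := by
  rw [ker_baseChange_opX_add_smul_opY, range_baseChange_opX_add_smul_opY, range_baseChange_inr]
  exact ⟨rfl, rfl⟩

/-- On `M_K = K ⊗_k M`, with `K = k(s)`, the kernel of multiplication by `x + sy` equals its
image, namely the `K`-span of the `vᵢ`. -/
theorem stmt11 (k : Type*) [Field k] [CharP k 2] :
    LinearMap.ker ((opX k).baseChange (RatFunc k) +
        (RatFunc.X : RatFunc k) • (opY k).baseChange (RatFunc k)) =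
      LinearMap.range ((opX k).baseChange (RatFunc k) +
        (RatFunc.X : RatFunc k) • (opY k).baseChange (RatFunc k)) ∧
    LinearMap.range ((opX k).baseChange (RatFunc k) +
        (RatFunc.X : RatFunc k) • (opY k).baseChange (RatFunc k)) =
      LinearMap.range ((LinearMap.inr k (ℕ →₀ k) (ℕ →₀ k)).baseChange (RatFunc k)) :=
  stmt11_general k
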